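/- arXiv:2602.13095 — 2 statements merged into one kernel-verified Lean document; each statement's English description precedes it below -/
import Mathlib

section
/- Consider the time-dependent GKSL equation on 2×2 complex matrices with H_t = (ω/2) σz and single jump operator L_t = √κ (σx cos(ωt) + σy sin(ωt)), where ω, κ > 0. For every real a, the time-dependent family ρ*_t = (1/2) [[1, a e^{−iωt}], [a e^{iωt}, 1]] satisfies ∂_t ρ*_t = L_t(ρ*_t) for all t; in particular, for −1 ≤ a ≤ 1 each ρ*_t is a density matrix and a time-dependent steady state of the equation. -/
open Matrix Filter
open scoped ComplexOrder

attribute [local instance] Matrix.normedAddCommGroup Matrix.normedSpace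

noncomputable def hsNorm {d : ℕ} (A : Matrix (Fin d) (Fin d) ℂ) : ℝ :=
  Real.sqrt ((Matrix.trace (Aᴴ * A)).re)

noncomputable def opNorm2 {d : ℕ}
    (Φ : Matrix (Fin d) (Fin d) ℂ → Matrix (Fin d) (Fin d) ℂ) : ℝ :=
  sSup {r : ℝ | ∃ A, hsNorm A = 1 ∧ r = hsNorm (Φ A)}

noncomputable def gksl {d M : ℕ} (H : ℝ → Matrix (Fin d) (Fin d) ℂ)
    (L : Fin M → ℝ → Matrix (Fin d) (Fin d) ℂ) (t : ℝ)
    (ρ : Matrix (Fin d) (Fin d) ℂ) : Matrix (Fin d) (Fin d) ℂ :=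
  (-Complex.I) • (H t * ρ - ρ * H t) +
    ∑ m : Fin M, (L m t * ρ * L m t - (2⁻¹ : ℂ) • ((L m t) ^ 2 * ρ + ρ * (L m t) ^ 2))

def CondQ {d : ℕ}
    (ℒ : ℝ → Matrix (Fin d) (Fin d) ℂ → Matrix (Fin d) (Fin d) ℂ) : Prop :=
  (∀ t0 : ℝ, 0 ≤ t0 → ∀ ε > (0 : ℝ), ∃ δ > (0 : ℝ), ∀ t : ℝ, 0 ≤ t → |t - t0| < δ →
      opNorm2 (fun A => ℒ t A - ℒ t0 A) < ε) ∧
  (∃ M > (0 : ℝ), ∀ t : ℝ, 0 ≤ t → opNorm2 (ℒ t) ≤ M) ∧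
  (∀ ε > (0 : ℝ), ∀ δ > (0 : ℝ), ∀ t0 : ℝ, 0 ≤ t0 →
    ∃ ts : ℕ → ℝ, (∀ n, 0 ≤ ts n) ∧ (∀ n, ts n + δ < ts (n + 1)) ∧
      ∀ n, ∀ t ∈ Set.Icc (0 : ℝ) δ,
        opNorm2 (fun A => ℒ (ts n + t) A - ℒ (t0 + t) A) < ε)

def IsDensity {d : ℕ} (ρ : Matrix (Fin d) (Fin d) ℂ) : Prop :=
  ρ.PosSemidef ∧ Matrix.trace ρ = 1


noncomputable def hsNormSq {d : ℕ} (A : Matrix (Fin d) (Fin d) ℂ) : ℝ :=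
  (Matrix.trace (Aᴴ * A)).re

noncomputable def opNorm2' {d : ℕ}
    (Φ : Matrix (Fin d) (Fin d) ℂ → Matrix (Fin d) (Fin d) ℂ) : ℝ :=
  sSup {r : ℝ | ∃ A, hsNorm A = 1 ∧ Matrix.trace A = 0 ∧ r = hsNorm (Φ A)}

/-- The adjoint operation on a time-dependent family of matrices:
`ad(A)_t = i[H_t, A_t] + ∂_t A_t`. -/
noncomputable def adOp {d : ℕ} (H : ℝ → Matrix (Fin d) (Fin d) ℂ)
    (A : ℝ → Matrix (Fin d) (Fin d) ℂ) : ℝ → Matrix (Fin d) (Fin d) ℂ :=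
  fun t => Complex.I • (H t * A t - A t * H t) + deriv A t

/-- `n`-fold application of the adjoint operation to a family of matrices. -/
noncomputable def adPow {d : ℕ} (H : ℝ → Matrix (Fin d) (Fin d) ℂ) :
    ℕ → (ℝ → Matrix (Fin d) (Fin d) ℂ) → (ℝ → Matrix (Fin d) (Fin d) ℂ)
  | 0, A => A
  | n + 1, A => adOp H (adPow H n A)


noncomputable def σx : Matrix (Fin 2) (Fin 2) ℂ := !![0, 1; 1, 0]
noncomputable def σy : Matrix (Fin 2) (Fin 2) ℂ := !![0, -Complex.I; Complex.I, 0]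
noncomputable def σz : Matrix (Fin 2) (Fin 2) ℂ := !![1, 0; 0, -1]



private lemma stmt14_key (ω κ a t : ℝ) :
    ((-(Complex.I*ω) * Complex.exp (-(Complex.I*ω*t))) * ((a:ℂ)/2)) • !![(0:ℂ),1;0,0]
      + ((Complex.I*ω * Complex.exp (Complex.I*ω*t)) * ((a:ℂ)/2)) • !![(0:ℂ),0;1,0]
    = gksl (fun _ => ((ω / 2 : ℝ) : ℂ) • σz)
        ![fun t => ((Real.sqrt κ : ℝ) : ℂ) •
            (((Real.cos (ω * t) : ℝ) : ℂ) • σx + ((Real.sin (ω * t) : ℝ) : ℂ) • σy)]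
        t ((2⁻¹ : ℂ) •
      !![1, (a : ℂ) * Complex.exp (-(Complex.I * (ω : ℂ) * (t : ℂ)));
         (a : ℂ) * Complex.exp (Complex.I * (ω : ℂ) * (t : ℂ)), 1]) := by
  have hc : ((Real.cos (ω*t) : ℝ) : ℂ)
      = (Complex.exp (Complex.I*ω*t) + Complex.exp (-(Complex.I*ω*t)))/2 := by
    rw [Complex.ofReal_cos]
    have h := Complex.two_cos ((ω*t : ℝ) : ℂ)
    have h1 : Complex.exp ((((ω*t):ℝ):ℂ) * Complex.I) = Complex.exp (Complex.I*ω*t) := by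
      congr 1; push_cast; ring
    have h2 : Complex.exp (-(((ω*t):ℝ):ℂ) * Complex.I) = Complex.exp (-(Complex.I*ω*t)) := by
      congr 1; push_cast; ring
    rw [h1, h2] at h; linear_combination h/2
  have hs : ((Real.sin (ω*t) : ℝ) : ℂ)
      = (Complex.exp (-(Complex.I*ω*t)) - Complex.exp (Complex.I*ω*t)) * Complex.I / 2 := by
    rw [Complex.ofReal_sin]
    have h := Complex.two_sin ((ω*t : ℝ) : ℂ)
    have h1 : Complex.exp ((((ω*t):ℝ):ℂ) * Complex.I) = Complex.exp (Complex.I*ω*t) := by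
      congr 1; push_cast; ring
    have h2 : Complex.exp (-(((ω*t):ℝ):ℂ) * Complex.I) = Complex.exp (-(Complex.I*ω*t)) := by
      congr 1; push_cast; ring
    rw [h1, h2] at h; linear_combination h/2
  set E := Complex.exp (Complex.I*ω*t) with hE
  set F := Complex.exp (-(Complex.I*ω*t)) with hF
  have hE0 : E ≠ 0 := Complex.exp_ne_zero _
  have hFinv : F = E⁻¹ := by rw [hF, hE, ← Complex.exp_neg]
  have hL : (((Real.cos (ω*t) : ℝ) : ℂ) • σx + ((Real.sin (ω*t) : ℝ) : ℂ) • σy)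
      = !![0, F; E, 0] := by
    ext i j
    fin_cases i <;> fin_cases j <;>
      · simp [σx, σy, hc, hs]
        try linear_combination ((E-F)/2) * Complex.I_sq
        try linear_combination ((F-E)/2) * Complex.I_sq
  have hσzP : σz * !![1, (a:ℂ)*F; (a:ℂ)*E, 1] = !![1, (a:ℂ)*F; -((a:ℂ)*E), -1] := by
    ext i j
    fin_cases i <;> fin_cases j <;>
      simp [σz, Matrix.mul_apply, Fin.sum_univ_two]
  have hPσz : !![1, (a:ℂ)*F; (a:ℂ)*E, 1] * σz = !![1, -((a:ℂ)*F); (a:ℂ)*E, -1] := by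
    ext i j
    fin_cases i <;> fin_cases j <;>
      simp [σz, Matrix.mul_apply, Fin.sum_univ_two]
  have hUP : !![(0:ℂ), F; E, 0] * !![1, (a:ℂ)*F; (a:ℂ)*E, 1]
      = !![(a:ℂ)*F*E, F; E, (a:ℂ)*E*F] := by
    ext i j
    fin_cases i <;> fin_cases j <;>
      · simp [Matrix.mul_apply, Fin.sum_univ_two]
        try ring
  have hUPU : !![(a:ℂ)*F*E, F; E, (a:ℂ)*E*F] * !![(0:ℂ), F; E, 0]
      = !![1, (a:ℂ)*F; (a:ℂ)*E, 1] := by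
    ext i j
    fin_cases i <;> fin_cases j <;>
      · simp [Matrix.mul_apply, Fin.sum_univ_two, hFinv]
        try field_simp
        try ring
        try simp
  have hU2 : !![(0:ℂ), F; E, 0] * !![(0:ℂ), F; E, 0] = 1 := by
    ext i j
    fin_cases i <;> fin_cases j <;>
      · simp [Matrix.mul_apply, Fin.sum_univ_two, hFinv, Matrix.one_apply]
        try field_simp
        try ring
  have hL' : ((Real.sqrt κ : ℝ) : ℂ) •
        (((Real.cos (ω * t) : ℝ) : ℂ) • σx + ((Real.sin (ω * t) : ℝ) : ℂ) • σy)
      = ((Real.sqrt κ : ℝ) : ℂ) • !![(0:ℂ), F; E, 0] := by rw [hL]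
  simp only [gksl, Fin.sum_univ_one, Matrix.cons_val_zero]
  rw [hL']
  simp only [smul_pow, pow_two, smul_mul_assoc, mul_smul_comm, smul_smul,
    hU2, hUP, hUPU, hσzP, hPσz, Matrix.mul_one, Matrix.one_mul, smul_add]
  ext i j
  fin_cases i <;> fin_cases j <;>
    · simp
      try ring

private lemma stmt14_psd (ω a t : ℝ) (ha1 : -1 ≤ a) (ha2 : a ≤ 1) :
    ((2⁻¹ : ℂ) •
      !![1, (a : ℂ) * Complex.exp (-(Complex.I * (ω : ℂ) * (t : ℂ)));
         (a : ℂ) * Complex.exp (Complex.I * (ω : ℂ) * (t : ℂ)), 1]).PosSemidef := by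
  have hc : ((Real.cos (ω*t) : ℝ) : ℂ)
      = (Complex.exp (Complex.I*ω*t) + Complex.exp (-(Complex.I*ω*t)))/2 := by
    rw [Complex.ofReal_cos]
    have h := Complex.two_cos ((ω*t : ℝ) : ℂ)
    have h1 : Complex.exp ((((ω*t):ℝ):ℂ) * Complex.I) = Complex.exp (Complex.I*ω*t) := by
      congr 1; push_cast; ring
    have h2 : Complex.exp (-(((ω*t):ℝ):ℂ) * Complex.I) = Complex.exp (-(Complex.I*ω*t)) := by
      congr 1; push_cast; ring
    rw [h1, h2] at h; linear_combination h/2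
  have hs : ((Real.sin (ω*t) : ℝ) : ℂ)
      = (Complex.exp (-(Complex.I*ω*t)) - Complex.exp (Complex.I*ω*t)) * Complex.I / 2 := by
    rw [Complex.ofReal_sin]
    have h := Complex.two_sin ((ω*t : ℝ) : ℂ)
    have h1 : Complex.exp ((((ω*t):ℝ):ℂ) * Complex.I) = Complex.exp (Complex.I*ω*t) := by
      congr 1; push_cast; ring
    have h2 : Complex.exp (-(((ω*t):ℝ):ℂ) * Complex.I) = Complex.exp (-(Complex.I*ω*t)) := by
      congr 1; push_cast; ring
    rw [h1, h2] at h; linear_combination h/2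
  -- express exps through cos/sin
  have hEp : Complex.exp (Complex.I*(ω:ℂ)*(t:ℂ))
      = ((Real.cos (ω*t) : ℝ) : ℂ) + ((Real.sin (ω*t) : ℝ) : ℂ) * Complex.I := by
    rw [hc, hs]; ring_nf; rw [Complex.I_sq]; ring
  have hEm : Complex.exp (-(Complex.I*(ω:ℂ)*(t:ℂ)))
      = ((Real.cos (ω*t) : ℝ) : ℂ) - ((Real.sin (ω*t) : ℝ) : ℂ) * Complex.I := by
    rw [hc, hs]; ring_nf; rw [Complex.I_sq]; ring
  rw [Matrix.posSemidef_iff_dotProduct_mulVec]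
  constructor
  · ext i j
    fin_cases i <;> fin_cases j <;>
      simp [Matrix.conjTranspose_apply, ← Complex.exp_conj, _root_.map_mul, Complex.conj_ofReal]
  · intro x
    simp only [Matrix.mulVec, dotProduct, Fin.sum_univ_two, Matrix.smul_apply,
      Matrix.cons_val', Matrix.cons_val_zero, Matrix.cons_val_one, Matrix.head_cons,
      Matrix.empty_val', Matrix.cons_val_fin_one, Matrix.head_fin_const, smul_eq_mul]
    rw [hEp, hEm, Complex.nonneg_iff]
    set c := Real.cos (ω*t)
    set s := Real.sin (ω*t)
    have hcs : s^2 + c^2 = 1 := Real.sin_sq_add_cos_sq _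
    constructor
    · simp [Complex.add_re, Complex.mul_re, Complex.mul_im, Complex.add_im]
      ring_nf
      set p := (x 0).re; set q := (x 0).im; set r := (x 1).re; set w := (x 1).im
      set T := c*(p*r+q*w) + s*(p*w-q*r) with hT
      clear_value p q r w T
      have haa : |a| ≤ 1 := abs_le.mpr ⟨ha1, ha2⟩
      have hT2 : T^2 ≤ (p^2+q^2)*(r^2+w^2) := by
        rw [hT]
        nlinarith [sq_nonneg (c*(p*w-q*r) - s*(p*r+q*w)), hcs, sq_nonneg (p*r+q*w), sq_nonneg (p*w-q*r)]
      have hM0 : (0:ℝ) ≤ (p^2+q^2+r^2+w^2)/2 := by positivity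
      have hTle : T^2 ≤ ((p^2+q^2+r^2+w^2)/2)^2 := by nlinarith [hT2, sq_nonneg (p^2+q^2-r^2-w^2)]
      have hsum : (0:ℝ) ≤ |T| + (p^2+q^2+r^2+w^2)/2 := by positivity
      have habs : |T| ≤ (p^2+q^2+r^2+w^2)/2 := by
        nlinarith [sq_abs T, abs_nonneg T, hsum, hTle]
      have haT : -|T| ≤ a*T := by
        have h1 : |a*T| ≤ |T| := by
          rw [abs_mul]; exact mul_le_of_le_one_left (abs_nonneg T) haa
        have h2 := neg_abs_le (a*T)
        linarith
      rw [hT] at habs haT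
      linarith [habs, haT]
    · simp [Complex.add_re, Complex.mul_re, Complex.mul_im, Complex.add_im]
      ring_nf

/-- rotating dephasing — the oscillating family `ρ*_t` solves the GKSL
equation, and is a density matrix (a time-dependent steady state) for `−1 ≤ a ≤ 1`. -/
theorem stmt14 (ω κ : ℝ) (hω : 0 < ω) (hκ : 0 < κ) (a : ℝ)
    (ρ : ℝ → Matrix (Fin 2) (Fin 2) ℂ)
    (hρ : ∀ t : ℝ, ρ t = (2⁻¹ : ℂ) •
      !![1, (a : ℂ) * Complex.exp (-(Complex.I * (ω : ℂ) * (t : ℂ)));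
         (a : ℂ) * Complex.exp (Complex.I * (ω : ℂ) * (t : ℂ)), 1]) :
    (∀ t : ℝ, HasDerivAt ρ
      (gksl (fun _ => ((ω / 2 : ℝ) : ℂ) • σz)
        ![fun t => ((Real.sqrt κ : ℝ) : ℂ) •
            (((Real.cos (ω * t) : ℝ) : ℂ) • σx + ((Real.sin (ω * t) : ℝ) : ℂ) • σy)]
        t (ρ t)) t) ∧
    (-1 ≤ a → a ≤ 1 → ∀ t : ℝ, IsDensity (ρ t)) := by
  have hd1 : ∀ t : ℝ, HasDerivAt (fun s : ℝ => Complex.exp (-(Complex.I * (ω:ℂ) * (s:ℂ))))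
      (-(Complex.I*(ω:ℂ)) * Complex.exp (-(Complex.I * (ω:ℂ) * (t:ℂ)))) t := by
    intro t
    have h : HasDerivAt (fun z : ℂ => Complex.exp (-(Complex.I * (ω:ℂ) * z)))
        (-(Complex.I*(ω:ℂ)) * Complex.exp (-(Complex.I * (ω:ℂ) * (t:ℂ)))) (t : ℂ) := by
      have h1 : HasDerivAt (fun z : ℂ => -(Complex.I * (ω:ℂ) * z)) (-(Complex.I*(ω:ℂ))) (t:ℂ) := by
        simpa [Pi.neg_def] using ((hasDerivAt_id (t:ℂ)).const_mul (Complex.I*(ω:ℂ))).neg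
      simpa [mul_comm] using h1.cexp
    exact h.comp_ofReal
  have hd2 : ∀ t : ℝ, HasDerivAt (fun s : ℝ => Complex.exp (Complex.I * (ω:ℂ) * (s:ℂ)))
      (Complex.I*(ω:ℂ) * Complex.exp (Complex.I * (ω:ℂ) * (t:ℂ))) t := by
    intro t
    have h : HasDerivAt (fun z : ℂ => Complex.exp (Complex.I * (ω:ℂ) * z))
        (Complex.I*(ω:ℂ) * Complex.exp (Complex.I * (ω:ℂ) * (t:ℂ))) (t : ℂ) := by
      have h1 : HasDerivAt (fun z : ℂ => Complex.I * (ω:ℂ) * z) (Complex.I*(ω:ℂ)) (t:ℂ) := by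
        simpa using (hasDerivAt_id (t:ℂ)).const_mul (Complex.I*(ω:ℂ))
      simpa [mul_comm] using h1.cexp
    exact h.comp_ofReal
  have hfun : ρ = fun s : ℝ => (2⁻¹:ℂ) • !![(1:ℂ),0;0,1]
      + (Complex.exp (-(Complex.I * (ω:ℂ) * (s:ℂ))) * ((a:ℂ)/2)) • !![(0:ℂ),1;0,0]
      + (Complex.exp (Complex.I * (ω:ℂ) * (s:ℂ)) * ((a:ℂ)/2)) • !![(0:ℂ),0;1,0] := by
    funext s
    rw [hρ s]
    ext i j
    fin_cases i <;> fin_cases j <;>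
      · simp
        try ring
  constructor
  · intro t
    rw [hρ t, ← stmt14_key ω κ a t]
    have hD := (((hasDerivAt_const t ((2⁻¹:ℂ) • !![(1:ℂ),0;0,1])).add
        (((hd1 t).mul_const ((a:ℂ)/2)).smul_const !![(0:ℂ),1;0,0])).add
        (((hd2 t).mul_const ((a:ℂ)/2)).smul_const !![(0:ℂ),0;1,0]))
    rw [hfun]
    simp [Pi.add_def] at hD ⊢
    exact hD
  · intro ha1 ha2 t
    refine ⟨by rw [hρ t]; exact stmt14_psd ω a t ha1 ha2, ?_⟩
    rw [hρ t]
    simp [Matrix.trace_fin_two]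
    norm_num
end

section
/- Let g ∈ ℝ and κ, T > 0, and define the 2×2 complex matrices K_0 = √((1 + e^{−κT/2})/2) · (cos(gT/4) I − i sin(gT/4) σx) and K_1 = √((1 − e^{−κT/2})/2) · (cos(gT/4) σz − sin(gT/4) σy). If gT ≠ 2mπ for every integer m, then the complex linear span of {K_0², K_0 K_1, K_1 K_0, K_1²} is the full space of 2×2 complex matrices. -/
open Matrix

/-- if `gT ≠ 2mπ` for every integer `m`, the products of the Kraus
operators `K_0, K_1` span all 2×2 complex matrices (the channel is mixing). -/
theorem stmt17 (g κ T : ℝ) (hκ : 0 < κ) (hT : 0 < T)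
    (K0 K1 : Matrix (Fin 2) (Fin 2) ℂ)
    (hK0 : K0 = ((Real.sqrt ((1 + Real.exp (-(κ * T) / 2)) / 2) : ℝ) : ℂ) •
      (((Real.cos (g * T / 4) : ℝ) : ℂ) • (1 : Matrix (Fin 2) (Fin 2) ℂ)
        - (Complex.I * ((Real.sin (g * T / 4) : ℝ) : ℂ)) • σx))
    (hK1 : K1 = ((Real.sqrt ((1 - Real.exp (-(κ * T) / 2)) / 2) : ℝ) : ℂ) •
      (((Real.cos (g * T / 4) : ℝ) : ℂ) • σz - ((Real.sin (g * T / 4) : ℝ) : ℂ) • σy))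
    (hg : ∀ m : ℤ, g * T ≠ 2 * (m : ℝ) * Real.pi) :
    Submodule.span ℂ
      ({K0 ^ 2, K0 * K1, K1 * K0, K1 ^ 2} : Set (Matrix (Fin 2) (Fin 2) ℂ)) = ⊤ := by
  set W := Submodule.span ℂ
      ({K0 ^ 2, K0 * K1, K1 * K0, K1 ^ 2} : Set (Matrix (Fin 2) (Fin 2) ℂ)) with hWdef
  -- basic positivity facts
  have hexp : Real.exp (-(κ * T) / 2) < 1 := by
    apply Real.exp_lt_one_iff.mpr; nlinarith [mul_pos hκ hT]
  have hexp0 : 0 < Real.exp (-(κ * T) / 2) := Real.exp_pos _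
  have ha : (0:ℝ) < Real.sqrt ((1 + Real.exp (-(κ * T) / 2)) / 2) :=
    Real.sqrt_pos.mpr (by linarith)
  have hb : (0:ℝ) < Real.sqrt ((1 - Real.exp (-(κ * T) / 2)) / 2) :=
    Real.sqrt_pos.mpr (by linarith)
  set a : ℝ := Real.sqrt ((1 + Real.exp (-(κ * T) / 2)) / 2) with haeq
  set b : ℝ := Real.sqrt ((1 - Real.exp (-(κ * T) / 2)) / 2) with hbeq
  set c : ℝ := Real.cos (g * T / 4) with hceq
  set s : ℝ := Real.sin (g * T / 4) with hseq
  -- sin (gT/2) ≠ 0, hence s ≠ 0 and c ≠ 0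
  have hsin : Real.sin (g * T / 2) ≠ 0 := by
    rw [ne_eq, Real.sin_eq_zero_iff]
    rintro ⟨n, hn⟩
    exact hg n (by linarith)
  have hsc : 2 * s * c ≠ 0 := by
    have h2 : Real.sin (g * T / 2) = 2 * s * c := by
      rw [show g * T / 2 = 2 * (g * T / 4) by ring, Real.sin_two_mul, hseq, hceq]
    rw [← h2]; exact hsin
  have hs : s ≠ 0 := by intro h; apply hsc; rw [h]; ring
  have hc : c ≠ 0 := by intro h; apply hsc; rw [h]; ring
  have hA : (a:ℂ) ≠ 0 := Complex.ofReal_ne_zero.mpr (ne_of_gt ha)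
  have hB : (b:ℂ) ≠ 0 := Complex.ofReal_ne_zero.mpr (ne_of_gt hb)
  have hS : (s:ℂ) ≠ 0 := Complex.ofReal_ne_zero.mpr hs
  have hC : (c:ℂ) ≠ 0 := Complex.ofReal_ne_zero.mpr hc
  have hcs : (c:ℂ)^2 + (s:ℂ)^2 = 1 := by
    have h : c^2 + s^2 = 1 := by rw [hceq, hseq]; exact Real.cos_sq_add_sin_sq _
    calc (c:ℂ)^2 + (s:ℂ)^2 = ((c^2 + s^2 : ℝ) : ℂ) := by push_cast; ring
      _ = 1 := by rw [h]; norm_num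
  -- generators belong to W
  have hW1 : K0 ^ 2 ∈ W := Submodule.subset_span (by simp)
  have hW2 : K0 * K1 ∈ W := Submodule.subset_span (by simp)
  have hW3 : K1 * K0 ∈ W := Submodule.subset_span (by simp)
  have hW4 : K1 ^ 2 ∈ W := Submodule.subset_span (by simp)
  -- explicit forms of the generators
  have E1 : K1 ^ 2 = ((b:ℂ)^2) • (1 : Matrix (Fin 2) (Fin 2) ℂ) := by
    rw [hK1]; ext i j
    fin_cases i <;> fin_cases j <;>
      · simp [σy, σz, pow_two, Matrix.mul_apply, Fin.sum_univ_two, Matrix.one_apply]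
        first
          | ring1
          | linear_combination ((b:ℂ)^2) * hcs - ((b:ℂ)^2 * (s:ℂ)^2) * Complex.I_sq
  have E2 : K1 * K0 = ((a:ℂ) * b) • σz := by
    rw [hK0, hK1]; ext i j
    fin_cases i <;> fin_cases j <;>
      · simp [σx, σy, σz, Matrix.mul_apply, Fin.sum_univ_two, Matrix.one_apply]
        first
          | ring1
          | linear_combination ((a:ℂ) * b) * hcs - ((a:ℂ) * b * (s:ℂ)^2) * Complex.I_sq
          | linear_combination (-(a:ℂ) * b) * hcs + ((a:ℂ) * b * (s:ℂ)^2) * Complex.I_sq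
  have E3 : K0 * K1 = ((a:ℂ) * b * ((c:ℂ)^2 - (s:ℂ)^2)) • σz
      - ((a:ℂ) * b * (2 * s * c)) • σy := by
    rw [hK0, hK1]; ext i j
    fin_cases i <;> fin_cases j <;>
      · simp [σx, σy, σz, Matrix.mul_apply, Fin.sum_univ_two, Matrix.one_apply]
        first
          | ring1
          | linear_combination ((a:ℂ) * b * (s:ℂ)^2) * Complex.I_sq
          | linear_combination (-(a:ℂ) * b * (s:ℂ)^2) * Complex.I_sq
  have E4 : K0 ^ 2 = ((a:ℂ)^2 * ((c:ℂ)^2 - (s:ℂ)^2)) • (1 : Matrix (Fin 2) (Fin 2) ℂ)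
      - (Complex.I * (a:ℂ)^2 * (2 * s * c)) • σx := by
    rw [hK0]; ext i j
    fin_cases i <;> fin_cases j <;>
      · simp [σx, pow_two, Matrix.mul_apply, Fin.sum_univ_two, Matrix.one_apply]
        first
          | ring1
          | linear_combination ((a:ℂ)^2 * (s:ℂ)^2) * Complex.I_sq
  -- Pauli matrices and the identity belong to W
  have hSC : (2 * (s:ℂ) * c) ≠ 0 := by
    intro h; apply hsc
    have : ((2 * s * c : ℝ) : ℂ) = 0 := by push_cast; linear_combination h
    exact_mod_cast this
  have h1 : (1 : Matrix (Fin 2) (Fin 2) ℂ) ∈ W := by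
    rw [← Submodule.smul_mem_iff W (pow_ne_zero 2 hB), ← E1]; exact hW4
  have hz : σz ∈ W := by
    rw [← Submodule.smul_mem_iff W (mul_ne_zero hA hB), ← E2]; exact hW3
  have hy : σy ∈ W := by
    rw [← Submodule.smul_mem_iff W (mul_ne_zero (mul_ne_zero hA hB) hSC)]
    have h4 : ((a:ℂ) * b * (2 * s * c)) • σy
        = ((a:ℂ) * b * ((c:ℂ)^2 - (s:ℂ)^2)) • σz - (K0 * K1) := by
      rw [E3]; module
    rw [h4]
    exact sub_mem (Submodule.smul_mem _ _ hz) hW2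
  have hx : σx ∈ W := by
    rw [← Submodule.smul_mem_iff W
      (mul_ne_zero (mul_ne_zero Complex.I_ne_zero (pow_ne_zero 2 hA)) hSC)]
    have h4 : (Complex.I * (a:ℂ)^2 * (2 * s * c)) • σx
        = ((a:ℂ)^2 * ((c:ℂ)^2 - (s:ℂ)^2)) • (1 : Matrix (Fin 2) (Fin 2) ℂ) - K0 ^ 2 := by
      rw [E4]; module
    rw [h4]
    exact sub_mem (Submodule.smul_mem _ _ h1) hW1
  -- standard basis matrices
  have e00 : single (0:Fin 2) (0:Fin 2) (1:ℂ) ∈ W := by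
    have he : single (0:Fin 2) (0:Fin 2) (1:ℂ)
        = ((1:ℂ)/2) • (1 : Matrix (Fin 2) (Fin 2) ℂ) + ((1:ℂ)/2) • σz := by
      ext i j; fin_cases i <;> fin_cases j <;>
        · simp [σz, Matrix.single, Matrix.one_apply]
          try norm_num
    rw [he]; exact add_mem (Submodule.smul_mem _ _ h1) (Submodule.smul_mem _ _ hz)
  have e11 : single (1:Fin 2) (1:Fin 2) (1:ℂ) ∈ W := by
    have he : single (1:Fin 2) (1:Fin 2) (1:ℂ)
        = ((1:ℂ)/2) • (1 : Matrix (Fin 2) (Fin 2) ℂ) - ((1:ℂ)/2) • σz := by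
      ext i j; fin_cases i <;> fin_cases j <;>
        · simp [σz, Matrix.single, Matrix.one_apply]
          try norm_num
    rw [he]; exact sub_mem (Submodule.smul_mem _ _ h1) (Submodule.smul_mem _ _ hz)
  have e01 : single (0:Fin 2) (1:Fin 2) (1:ℂ) ∈ W := by
    have he : single (0:Fin 2) (1:Fin 2) (1:ℂ)
        = ((1:ℂ)/2) • σx + (Complex.I/2) • σy := by
      ext i j; fin_cases i <;> fin_cases j <;>
        · simp [σx, σy, Matrix.single]
          try first
            | ring1
            | linear_combination (1/2 : ℂ) * Complex.I_sq
            | linear_combination (-1/2 : ℂ) * Complex.I_sq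
    rw [he]; exact add_mem (Submodule.smul_mem _ _ hx) (Submodule.smul_mem _ _ hy)
  have e10 : single (1:Fin 2) (0:Fin 2) (1:ℂ) ∈ W := by
    have he : single (1:Fin 2) (0:Fin 2) (1:ℂ)
        = ((1:ℂ)/2) • σx - (Complex.I/2) • σy := by
      ext i j; fin_cases i <;> fin_cases j <;>
        · simp [σx, σy, Matrix.single]
          try first
            | ring1
            | linear_combination (1/2 : ℂ) * Complex.I_sq
            | linear_combination (-1/2 : ℂ) * Complex.I_sq
    rw [he]; exact sub_mem (Submodule.smul_mem _ _ hx) (Submodule.smul_mem _ _ hy)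
  -- conclude
  rw [eq_top_iff]
  rintro M -
  rw [matrix_eq_sum_single M]
  refine Submodule.sum_mem _ fun i _ => Submodule.sum_mem _ fun j _ => ?_
  have hsm : single i j (M i j) = (M i j) • single i j (1:ℂ) := by
    rw [smul_single, smul_eq_mul, mul_one]
  rw [hsm]
  apply Submodule.smul_mem
  fin_cases i <;> fin_cases j <;> assumption
end
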